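/- Let G be a finite insoluble group and x ∈ G. Then the cardinality of Sol_G(x) is not a prime number. -/

import Mathlib

/-!
Since `Sol x` is a union of left cosets of `⟨x⟩`, the order of `x` divides `|Sol x|`. So if
`|Sol x| = p` is prime, either `x = 1` and `G = Sol 1` has order `p`, or `Sol x = ⟨x⟩` has
order `p`. In the second case argue by induction on `|G|`: every proper subgroup containing `x`
is solvable, hence lies in `Sol x = ⟨x⟩`, and `⟨x⟩` is self-normalizing. So `⟨x⟩` is a Sylow
subgroup with `N(⟨x⟩) = C(⟨x⟩)`, and Burnside's transfer theorem gives a normal complement `N`.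
Since `p` does not divide `|N|`, the `p`-group `⟨x⟩` normalizes a Sylow `q`-subgroup `Q ≠ 1`
of `N`. Now `Q⟨x⟩` is not contained in `⟨x⟩`, so `Q⟨x⟩ = G`; then `Q` is normal with cyclic
quotient, and `G` is solvable.
-/

def Sol {G : Type*} [Group G] (x : G) : Set G :=
  {y | IsSolvable ↥(Subgroup.closure {x, y})}

open Subgroup

section

variable {G : Type*} [Group G]

instance Group.isSolvable_of_isMulCommutative [IsMulCommutative G] : Group.IsSolvable G :=
  Group.isSolvable_of_comm fun a b => IsMulCommutative.is_comm.comm a b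

theorem isSolvable_of_nat_card_prime {p : ℕ} (hp : p.Prime) (h : Nat.card G = p) :
    Group.IsSolvable G := by
  have := Fact.mk hp
  have := isCyclic_of_prime_card h
  infer_instance

theorem isSolvable_of_sup_zpowers_eq_top {M : Subgroup G} [Group.IsSolvable M] {x : G}
    (hx : x ∈ normalizer (M : Set G)) (h : M ⊔ zpowers x = ⊤) : Group.IsSolvable G := by
  have : M.Normal := normalizer_eq_top_iff.mp <|
    top_le_iff.mp (h ▸ sup_le le_normalizer (zpowers_le.mpr hx))
  have hsurj : Function.Surjective ((QuotientGroup.mk' M).comp (zpowers x).subtype) := by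
    rw [← MonoidHom.range_eq_top, MonoidHom.range_comp, range_subtype, ← bot_sup_eq (map _ _),
      ← QuotientGroup.map_mk'_self M, ← Subgroup.map_sup, h,
      map_top_of_surjective _ (QuotientGroup.mk'_surjective M)]
  have : Group.IsSolvable (G ⧸ M) := Group.isSolvable_of_surjective hsurj
  exact (Group.isSolvable_iff_subgroup_quotient M).mpr ⟨‹_›, ‹_›⟩

theorem isSolvable_closure_pair_of_mem_normalizer {x y : G}
    (hy : y ∈ normalizer (zpowers x : Set G)) : Group.IsSolvable (closure {x, y}) := by
  have hyK : y ∈ closure {x, y} := subset_closure (Set.mem_insert_of_mem x rfl)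
  refine isSolvable_of_sup_zpowers_eq_top (M := (zpowers x).subgroupOf _) (x := ⟨y, hyK⟩)
    (fun z => hy z) ?_
  refine top_le_iff.mp <| closure_closure_coe_preimage.ge.trans <| (closure_le _).mpr ?_
  rintro ⟨z, hz⟩ (rfl | rfl : z = x ∨ z = y)
  · exact mem_sup_left (mem_subgroupOf.mpr (mem_zpowers _))
  · exact mem_sup_right (mem_zpowers _)

theorem mem_sol {x y : G} : y ∈ Sol x ↔ Group.IsSolvable (closure {x, y}) := Iff.rfl

theorem subset_sol_of_isSolvable {K : Subgroup G} [Group.IsSolvable K] {x : G} (hx : x ∈ K) :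
    (K : Set G) ⊆ Sol x := fun _ hy =>
  Group.isSolvable_of_isSolvable_injective <| inclusion_injective <|
    (closure_le K).mpr (Set.insert_subset hx (Set.singleton_subset_iff.mpr hy))

theorem normalizer_zpowers_subset_sol (x : G) :
    (normalizer (zpowers x : Set G) : Set G) ⊆ Sol x := fun _ hy =>
  isSolvable_closure_pair_of_mem_normalizer hy

theorem zpowers_subset_sol (x : G) : (zpowers x : Set G) ⊆ Sol x := fun _ hy =>
  normalizer_zpowers_subset_sol x (le_normalizer hy)

theorem sol_one : Sol (1 : G) = Set.univ :=
  Set.eq_univ_of_subset (normalizer_zpowers_subset_sol 1)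
    (by rw [zpowers_one_eq_bot, normalizer_eq_top]; rfl)

theorem mul_mem_sol {x y h : G} (hy : y ∈ Sol x) (hh : h ∈ zpowers x) : y * h ∈ Sol x := by
  rw [mem_sol] at hy
  have hx : x ∈ closure {x, y} := subset_closure (Set.mem_insert x _)
  exact subset_sol_of_isSolvable hx <|
    mul_mem (subset_closure (Set.mem_insert_of_mem x rfl)) (zpowers_le.mpr hx hh)

theorem card_zpowers_dvd_card_sol [Finite G] (x : G) :
    Nat.card (zpowers x) ∣ Nat.card (Sol x) := by
  have hpre : QuotientGroup.mk ⁻¹' (QuotientGroup.mk '' Sol x : Set (G ⧸ zpowers x)) = Sol x := by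
    refine Set.Subset.antisymm ?_ (Set.subset_preimage_image _ _)
    rintro a ⟨s, hs, hsa⟩
    simpa using mul_mem_sol hs (QuotientGroup.eq.mp hsa)
  rw [← hpre, Nat.card_congr (QuotientGroup.preimageMkEquivSubgroupProdSet _ _), Nat.card_prod]
  exact dvd_mul_right _ _

theorem map_mem_sol_iff {G' : Type*} [Group G'] {f : G →* G'} (hf : Function.Injective f)
    {x y : G} : f y ∈ Sol (f x) ↔ y ∈ Sol x := by
  have e : closure {x, y} ≃* closure {f x, f y} := by
    rw [← Set.image_pair, ← MonoidHom.map_closure]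
    exact equivMapOfInjective _ f hf
  rw [mem_sol, mem_sol]
  exact ⟨fun _ => Group.isSolvable_of_surjective (f := e.symm.toMonoidHom) e.symm.surjective,
    fun _ => Group.isSolvable_of_surjective (f := e.toMonoidHom) e.surjective⟩

theorem sol_mk_eq_zpowers {K : Subgroup G} {x : G} (hx : x ∈ K) (h : Sol x = zpowers x) :
    Sol (⟨x, hx⟩ : K) = (zpowers (⟨x, hx⟩ : K) : Set K) := by
  ext y
  rw [← map_mem_sol_iff K.subtype_injective, SetLike.mem_coe,
    ← mem_map_iff_mem K.subtype_injective, MonoidHom.map_zpowers]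
  exact Set.ext_iff.mp h y

theorem exists_sylow_eq_of_normalizer_eq [Finite G] {p n : ℕ} [Fact p.Prime] {H : Subgroup G}
    (hH : Nat.card H = p ^ n) (hN : normalizer (H : Set G) = H) :
    ∃ P : Sylow p G, (P : Subgroup G) = H := by
  refine ⟨(IsPGroup.of_card hH).toSylow fun hdvd => ?_, rfl⟩
  have hG : p ^ (n + 1) ∣ Nat.card G := by
    rw [← H.card_mul_index, hH, pow_succ]
    exact mul_dvd_mul_left _ hdvd
  have := Sylow.prime_pow_dvd_card_normalizer hG hH
  rw [hN, hH, Nat.pow_dvd_pow_iff_le_right (Fact.out : p.Prime).one_lt] at this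
  omega

theorem exists_sylow_le_normalizer [Finite G] {p q : ℕ} [Fact p.Prime] [Fact q.Prime]
    {N : Subgroup G} [N.Normal] (hpN : ¬ p ∣ Nat.card N) {H : Subgroup G} (hH : IsPGroup p H) :
    ∃ Q : Sylow q N, H ≤ normalizer ((Q : Subgroup N).map N.subtype : Set G) := by
  let _ : MulAction H (Sylow q N) :=
    MulAction.compHom _ ((MulAut.conjNormal (H := N)).comp H.subtype)
  obtain ⟨Q₀⟩ := (inferInstance : Nonempty (Sylow q N))
  obtain ⟨Q, hQ⟩ := hH.nonempty_fixed_point_of_prime_not_dvd_card (Sylow q N) fun h =>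
    hpN (h.trans (Q₀.card_dvd_index.trans (index_dvd_card _)))
  refine ⟨Q, fun h hh => mem_normalizer_iff_map_conj_eq.mpr ?_⟩
  have hQh : (Q : Subgroup N).map (MulAut.conjNormal h).toMonoidHom = Q :=
    congrArg Sylow.toSubgroup (hQ ⟨h, hh⟩)
  conv_rhs => rw [← hQh]
  rw [map_map, map_map]
  rfl

theorem isSolvable_of_forall_le_zpowers [Finite G] {p : ℕ} [Fact p.Prime] {x : G}
    (hx : IsPGroup p (zpowers x)) (hN : normalizer (zpowers x : Set G) = zpowers x)
    (hmax : ∀ K : Subgroup G, x ∈ K → K ≠ ⊤ → K ≤ zpowers x) : Group.IsSolvable G := by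
  by_contra hG
  obtain ⟨n, hn⟩ := hx.exists_card_eq
  obtain ⟨P, hP⟩ := exists_sylow_eq_of_normalizer_eq hn hN
  have hPc : normalizer (P : Set G) ≤ centralizer (P : Set G) := by
    change normalizer ((P : Subgroup G) : Set G) ≤ centralizer ((P : Subgroup G) : Set G)
    rw [hP, hN]
    exact le_centralizer _
  set N := (MonoidHom.transferSylow P hPc).ker
  have hcompl : N.IsComplement' (zpowers x) :=
    hP ▸ MonoidHom.ker_transferSylow_isComplement' P hPc
  have hN1 : Nat.card N ≠ 1 := fun h => hG <| by
    have : Subsingleton N := (Nat.card_eq_one_iff_unique.mp h).1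
    exact isSolvable_of_sup_zpowers_eq_top (normalizer_eq_top (H := N) ▸ mem_top x)
      hcompl.sup_eq_top
  have := Fact.mk (Nat.minFac_prime hN1)
  obtain ⟨Q, hQ⟩ := exists_sylow_le_normalizer (q := (Nat.card N).minFac)
    (MonoidHom.not_dvd_card_ker_transferSylow P hPc) hx
  set M := (Q : Subgroup N).map N.subtype
  have := (Q.2.map N.subtype).isNilpotent
  by_cases hMx : M ⊔ zpowers x = ⊤
  · exact hG (isSolvable_of_sup_zpowers_eq_top (hQ (mem_zpowers x)) hMx)
  have hMN : M ≤ N ⊓ zpowers x := le_inf (map_subtype_le _)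
    (le_sup_left.trans (hmax _ (mem_sup_right (mem_zpowers x)) hMx))
  rw [hcompl.disjoint.eq_bot, le_bot_iff,
    map_eq_bot_iff_of_injective _ N.subtype_injective] at hMN
  exact Q.ne_bot_of_dvd_card (Nat.minFac_dvd _) hMN

theorem isSolvable_of_sol_eq_zpowers [Finite G] {x : G} (hx : (orderOf x).Prime)
    (hsol : Sol x = zpowers x) : Group.IsSolvable G := by
  induction hn : Nat.card G using Nat.strong_induction_on generalizing G with
  | _ n ih =>
  have := Fact.mk hx
  have hmax : ∀ K : Subgroup G, x ∈ K → K ≠ ⊤ → K ≤ zpowers x := fun K hxK hK => by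
    have hlt : Nat.card K < n :=
      hn ▸ (card_le_card_group K).lt_of_ne fun h => hK (eq_top_of_card_eq K h)
    have : Group.IsSolvable K :=
      ih _ hlt (x := ⟨x, hxK⟩) (by rwa [orderOf_mk]) (sol_mk_eq_zpowers hxK hsol) rfl
    exact (subset_sol_of_isSolvable hxK).trans hsol.subset
  refine isSolvable_of_forall_le_zpowers (p := orderOf x)
    (IsPGroup.of_card (by rw [Nat.card_zpowers, pow_one])) ?_ hmax
  exact le_antisymm ((normalizer_zpowers_subset_sol x).trans hsol.subset) le_normalizer

end

theorem stmt19 {G : Type*} [Group G] [Finite G] (hG : ¬ IsSolvable G) (x : G) :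
    ¬ (Nat.card (Sol x)).Prime := by
  intro hp
  rcases hp.eq_one_or_self_of_dvd _ (card_zpowers_dvd_card_sol x) with h1 | hcard
  · rw [Nat.card_zpowers, orderOf_eq_one_iff] at h1
    subst h1
    rw [sol_one, Nat.card_univ] at hp
    exact hG (isSolvable_of_nat_card_prime hp rfl)
  · have hsol : Sol x = zpowers x := (Set.eq_of_subset_of_ncard_le (zpowers_subset_sol x) (by
      rw [← Nat.card_coe_set_eq, ← Nat.card_coe_set_eq, SetLike.coe_sort_coe, hcard])).symm
    exact hG (isSolvable_of_sol_eq_zpowers (by rwa [← Nat.card_zpowers, hcard]) hsol)
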